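/- For a bipartite pure state |ψ⟩ on H_X ⊗ H_Y and an LOCC (in particular, any separable) channel mapping it to a pure state |φ⟩ on H_X ⊗ H_Y, the Schmidt rank of φ is at most the Schmidt rank of ψ. Consequently, if |ψ⟩^{RAA'} ⊗ |Φ_K⁺⟩ is transformed by operations local to the bipartition (RA : B-side) into |ψ⟩^{RAB}, then K ≥ rank ψ^{A'}. -/

import Mathlib

/-!
Identify `ψ : X × Y → ℂ` with its coefficient matrix `Ψ x y = ψ (x, y)`, whose rank is the
Schmidt rank. Then `(A ⊗ₖ B) *ᵥ ψ` has coefficient matrix `A * Ψ * Bᵀ`, so a product operator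
never increases the Schmidt rank. If `∑ₖ |vₖ⟩⟨vₖ| = |φ⟩⟨φ|`, evaluating the quadratic form at any
`w ⊥ φ` gives `∑ₖ |⟨vₖ, w⟩|² = 0`; hence every `vₖ` lies in `(φ⊥)⊥ = ℂ φ`. Applied to the
branches `vₖ = (Aₖ ⊗ₖ Bₖ) ψ` of a separable channel, some branch is a nonzero multiple of `φ`.
In state splitting the input's second factor is `Fin K`, so its Schmidt rank is at most `K`.
-/

open Matrix Kronecker Finset
open scoped ComplexConjugate Classical ComplexOrder

noncomputable section

/-- Density matrix (outer product) of a vector. -/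
def dmv {n : Type*} (v : n → ℂ) : Matrix n n ℂ :=
  Matrix.of fun i j => v i * conj (v j)

/-- Outer product `|u⟩⟨v|`. -/
def outer {n : Type*} (u v : n → ℂ) : Matrix n n ℂ :=
  Matrix.of fun i j => u i * conj (v j)

/-- Largest eigenvalue of a (Hermitian) matrix. -/
def maxEig {n : Type*} [Fintype n] [DecidableEq n] (A : Matrix n n ℂ) : ℝ :=
  if h : A.IsHermitian then ⨆ i, h.eigenvalues i else 0

/-- Sum of the `k` largest eigenvalues of a Hermitian matrix. -/
def topSum {n : Type*} [Fintype n] [DecidableEq n] (A : Matrix n n ℂ) (k : ℕ) : ℝ :=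
  if h : A.IsHermitian then
    sSup {x : ℝ | ∃ s : Finset n, s.card = k ∧ x = ∑ i ∈ s, h.eigenvalues i}
  else 0

/-- Majorization of Hermitian operators: `A ≺ B` (possibly on different spaces):
every partial sum of the `k` largest eigenvalues of `A` is at most that of `B`,
and the traces agree. -/
def Maj {m n : Type*} [Fintype m] [DecidableEq m] [Fintype n] [DecidableEq n]
    (A : Matrix m m ℂ) (B : Matrix n n ℂ) : Prop :=
  (∀ k : ℕ, topSum A k ≤ topSum B k) ∧ A.trace = B.trace

/-- The positive semidefinite square root of a positive semidefinite matrix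
(the definition removed from Mathlib, restated with its old meaning). -/
def Matrix.PosSemidef.sqrt {n : Type*} [Fintype n] [DecidableEq n] {A : Matrix n n ℂ}
    (hA : A.PosSemidef) : Matrix n n ℂ :=
  (hA.1.eigenvectorUnitary : Matrix n n ℂ) * diagonal ((↑) ∘ (√·) ∘ hA.1.eigenvalues) *
    (star hA.1.eigenvectorUnitary : Matrix n n ℂ)

/-- Total matrix square root: the positive square root for PSD matrices, `0` otherwise. -/
def msqrt {n : Type*} [Fintype n] [DecidableEq n] (A : Matrix n n ℂ) : Matrix n n ℂ :=
  if h : A.PosSemidef then h.sqrt else 0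

/-- Trace norm (sum of singular values). -/
def traceNorm {n : Type*} [Fintype n] [DecidableEq n] (A : Matrix n n ℂ) : ℝ :=
  ((msqrt (Aᴴ * A)).trace).re

/-- Fidelity `F(ρ,σ) = ‖√ρ √σ‖₁`. -/
def fid {n : Type*} [Fintype n] [DecidableEq n] (ρ σ : Matrix n n ℂ) : ℝ :=
  traceNorm (msqrt ρ * msqrt σ)

/-- Purified distance `P(ρ,σ) = √(1 − F²(ρ,σ))`. -/
def pd {n : Type*} [Fintype n] [DecidableEq n] (ρ σ : Matrix n n ℂ) : ℝ :=
  Real.sqrt (1 - fid ρ σ ^ 2)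

/-- Choi matrix of a map on matrices. -/
def choi {m n : Type*} [Fintype m] [DecidableEq m]
    (N : Matrix m m ℂ → Matrix n n ℂ) : Matrix (m × n) (m × n) ℂ :=
  Matrix.of fun p q => N (Matrix.single p.1 q.1 1) p.2 q.2

/-- A map is mixed-unitary if it is a convex combination of unitary conjugations. -/
def IsMixedUnitary {n : Type*} [Fintype n] [DecidableEq n]
    (N : Matrix n n ℂ → Matrix n n ℂ) : Prop :=
  ∃ (m : ℕ) (p : Fin m → ℝ) (U : Fin m → Matrix n n ℂ),
    (∀ i, 0 ≤ p i) ∧ (∑ i, p i = 1) ∧ (∀ i, U i ∈ Matrix.unitaryGroup n ℂ) ∧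
    ∀ ρ, N ρ = ∑ i, (p i : ℂ) • (U i * ρ * (U i)ᴴ)

/-- `id_R ⊗ M` acting blockwise on a matrix on `R × S`. -/
def idTensor {R S T : Type*} (M : Matrix S S ℂ →ₗ[ℂ] Matrix T T ℂ)
    (ρ : Matrix (R × S) (R × S) ℂ) : Matrix (R × T) (R × T) ℂ :=
  Matrix.of fun p q => M (Matrix.of fun s s' => ρ (p.1, s) (q.1, s')) p.2 q.2

end

noncomputable def schmidtRank {X Y : Type*} [Fintype Y] (ψ : X × Y → ℂ) : ℕ :=
  (Matrix.of fun x y => ψ (x, y)).rank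

lemma dmv_eq_vecMulVec {n : Type*} (v : n → ℂ) : dmv v = vecMulVec v (star v) := rfl

@[simp]
lemma dmv_zero {n : Type*} : dmv (0 : n → ℂ) = 0 := by
  simp [dmv_eq_vecMulVec]

section
variable {ι n : Type*} [Fintype ι] [Fintype n]

lemma star_dotProduct_dmv_mulVec (u w : n → ℂ) :
    star w ⬝ᵥ (dmv u *ᵥ w) = star (star u ⬝ᵥ w) * (star u ⬝ᵥ w) := by
  rw [dmv_eq_vecMulVec, vecMulVec_mulVec, op_smul_eq_smul, dotProduct_smul, smul_eq_mul,
    ← star_dotProduct, mul_comm]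

lemma mul_dmv_mul_conjTranspose {m : Type*} [Fintype m] (M : Matrix m n ℂ) (v : n → ℂ) :
    M * dmv v * Mᴴ = dmv (M *ᵥ v) := by
  rw [dmv_eq_vecMulVec, dmv_eq_vecMulVec, mul_vecMulVec, vecMulVec_mul, star_mulVec]

lemma dmv_eq_zero_iff {v : n → ℂ} : dmv v = 0 ↔ v = 0 := by
  refine ⟨fun h => ?_, fun h => h ▸ dmv_zero⟩
  have := star_dotProduct_dmv_mulVec v v
  rw [h, zero_mulVec, dotProduct_zero, eq_comm] at this
  simpa using this

variable {v : ι → n → ℂ} {φ : n → ℂ}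

lemma star_dotProduct_eq_zero_of_sum_dmv_eq (h : ∑ k, dmv (v k) = dmv φ) {w : n → ℂ}
    (hw : star φ ⬝ᵥ w = 0) (k : ι) : star (v k) ⬝ᵥ w = 0 := by
  set z : ι → ℂ := fun k => star (v k) ⬝ᵥ w
  have hz : star z ⬝ᵥ z = 0 := calc
    star z ⬝ᵥ z = star w ⬝ᵥ ((∑ k, dmv (v k)) *ᵥ w) := by
      simp only [sum_mulVec, dotProduct_sum, star_dotProduct_dmv_mulVec]
      rfl
    _ = 0 := by rw [h, star_dotProduct_dmv_mulVec, hw, mul_zero]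
  exact congrFun (dotProduct_star_self_eq_zero.mp hz) k

lemma mem_span_singleton_of_sum_dmv_eq (h : ∑ k, dmv (v k) = dmv φ) (k : ι) :
    v k ∈ ℂ ∙ φ := by
  set c := (star φ ⬝ᵥ v k) / (star φ ⬝ᵥ φ)
  set w := v k - c • φ
  have hφw : star φ ⬝ᵥ w = 0 := by
    rcases eq_or_ne φ 0 with rfl | hφ
    · simp
    · rw [dotProduct_sub, dotProduct_smul, smul_eq_mul,
        div_mul_cancel₀ _ (dotProduct_star_self_eq_zero.not.mpr hφ), sub_self]
  have hww : star w ⬝ᵥ w = 0 := by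
    rw [star_sub, star_smul, sub_dotProduct, smul_dotProduct, smul_eq_mul, hφw, mul_zero,
      star_dotProduct_eq_zero_of_sum_dmv_eq h hφw k, sub_zero]
  exact Submodule.mem_span_singleton.mpr
    ⟨c, (sub_eq_zero.mp (dotProduct_star_self_eq_zero.mp hww)).symm⟩

end

lemma schmidtRank_vec {X Y : Type*} [Fintype X] [Fintype Y] (M : Matrix Y X ℂ) :
    schmidtRank (vec M) = M.rank :=
  rank_transpose M

lemma schmidtRank_smul {X Y : Type*} [Fintype Y] {c : ℂ} (hc : c ≠ 0) (ψ : X × Y → ℂ) :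
    schmidtRank (c • ψ) = schmidtRank ψ :=
  rank_smul_of_mem_nonZeroDivisors _ (mem_nonZeroDivisors_of_ne_zero hc)

lemma schmidtRank_kronecker_mulVec_le {X Y X' Y' : Type*} [Fintype X] [Fintype Y] [Fintype X']
    [Fintype Y'] (A : Matrix X' X ℂ) (B : Matrix Y' Y ℂ) (ψ : X × Y → ℂ) :
    schmidtRank ((A ⊗ₖ B) *ᵥ ψ) ≤ schmidtRank ψ := by
  obtain ⟨M, rfl⟩ := vec_bijective.surjective ψ
  rw [kronecker_mulVec_vec, schmidtRank_vec, schmidtRank_vec]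
  exact (rank_mul_le_left _ _).trans (rank_mul_le_right _ _)

theorem schmidtRank_le_of_sum_kronecker_conj_eq {ι X Y X' Y' : Type*} [Fintype ι] [Fintype X]
    [Fintype Y] [Fintype X'] [Fintype Y'] {ψ : X × Y → ℂ} {φ : X' × Y' → ℂ}
    (hφ : φ ≠ 0)
    (A : ι → Matrix X' X ℂ) (B : ι → Matrix Y' Y ℂ)
    (h : ∑ k, (A k ⊗ₖ B k) * dmv ψ * (A k ⊗ₖ B k)ᴴ = dmv φ) :
    schmidtRank φ ≤ schmidtRank ψ := by
  simp only [mul_dmv_mul_conjTranspose] at h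
  obtain ⟨k, hk⟩ : ∃ k, (A k ⊗ₖ B k) *ᵥ ψ ≠ 0 := by
    by_contra! hzero
    exact hφ (dmv_eq_zero_iff.mp (by simp [← h, hzero]))
  obtain ⟨c, hc⟩ := Submodule.mem_span_singleton.mp (mem_span_singleton_of_sum_dmv_eq h k)
  have hc0 : c ≠ 0 := by rintro rfl; exact hk (by simp [← hc])
  calc schmidtRank φ = schmidtRank (c • φ) := (schmidtRank_smul hc0 φ).symm
    _ = schmidtRank ((A k ⊗ₖ B k) *ᵥ ψ) := by rw [hc]
    _ ≤ schmidtRank ψ := schmidtRank_kronecker_mulVec_le _ _ _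

lemma ne_zero_of_sum_norm_sq_eq_one {n : Type*} [Fintype n] {ψ : n → ℂ}
    (h : ∑ x, ‖ψ x‖ ^ 2 = 1) : ψ ≠ 0 := by
  rintro rfl
  simp at h

/-- the Schmidt rank is monotone under separable (in particular LOCC)
channels; consequently exact state splitting requires `K ≥ rank ψ^{A'}`. -/
theorem stmt13 :
    (∀ (X Y X' Y' ι : Type) [Fintype X] [Fintype Y] [Fintype X'] [Fintype Y'] [Fintype ι]
      [DecidableEq X] [DecidableEq Y] [DecidableEq X'] [DecidableEq Y']
      (ψ : X × Y → ℂ) (φ : X' × Y' → ℂ)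
      (A : ι → Matrix X' X ℂ) (B : ι → Matrix Y' Y ℂ),
      (∑ x, ‖ψ x‖ ^ 2 = 1) → (∑ x, ‖φ x‖ ^ 2 = 1) →
      (∑ k, (A k ⊗ₖ B k)ᴴ * (A k ⊗ₖ B k) = 1) →
      (∑ k, (A k ⊗ₖ B k) * dmv ψ * (A k ⊗ₖ B k)ᴴ = dmv φ) →
      (Matrix.of fun (x : X') (y : Y') => φ (x, y)).rank ≤
        (Matrix.of fun (x : X) (y : Y) => ψ (x, y)).rank) ∧
    (∀ (R A2 A' ι : Type) [Fintype R] [Fintype A2] [Fintype A'] [Fintype ι]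
      [DecidableEq R] [DecidableEq A2] [DecidableEq A']
      (K : ℕ) (_ : 0 < K)
      (ψ0 : R × A2 × A' → ℂ) (_ : ∑ x, ‖ψ0 x‖ ^ 2 = 1)
      (E : ι → Matrix (R × A2) (R × A2 × A' × Fin K) ℂ)
      (F : ι → Matrix A' (Fin K) ℂ),
      (∑ k, (E k ⊗ₖ F k)ᴴ * (E k ⊗ₖ F k) = 1) →
      (∑ k, (E k ⊗ₖ F k) *
          dmv (fun p : (R × A2 × A' × Fin K) × Fin K =>
            ψ0 (p.1.1, p.1.2.1, p.1.2.2.1) * ((Real.sqrt K : ℝ) : ℂ)⁻¹ *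
              (if p.1.2.2.2 = p.2 then 1 else 0)) *
          (E k ⊗ₖ F k)ᴴ =
        dmv (fun p : (R × A2) × A' => ψ0 (p.1.1, p.1.2, p.2))) →
      (Matrix.of fun (x : R × A2) (y : A') => ψ0 (x.1, x.2, y)).rank ≤ K) := by
  refine ⟨fun X Y X' Y' ι _ _ _ _ _ _ _ _ _ ψ φ A B _ hφ _ h => ?_,
    fun R A2 A' ι _ _ _ _ _ _ _ K _ ψ0 hψ0 E F _ h => ?_⟩
  · exact schmidtRank_le_of_sum_kronecker_conj_eq (ne_zero_of_sum_norm_sq_eq_one hφ) A B h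
  · have hout : (fun p : (R × A2) × A' => ψ0 (p.1.1, p.1.2, p.2)) ≠ 0 := by
      refine fun h0 => ne_zero_of_sum_norm_sq_eq_one hψ0 (funext fun ⟨r, a, a'⟩ => ?_)
      exact congrFun h0 ((r, a), a')
    calc _ ≤ schmidtRank _ := schmidtRank_le_of_sum_kronecker_conj_eq hout E F h
      _ ≤ K := (rank_le_card_width _).trans_eq (Fintype.card_fin K)
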